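/- For every compact metrizable space X, the space J(X) of max-min measures on X and the space I(X) of max-plus (idempotent) measures on X, both endowed with the weak* topology, are homeomorphic. -/

import Mathlib

def IsMaxMinMeasure {X : Type*} [TopologicalSpace X] (μ : C(X, ℝ) → ℝ) : Prop :=
  (∀ c : ℝ, μ (ContinuousMap.const X c) = c) ∧
  (∀ φ ψ : C(X, ℝ), μ (φ ⊔ ψ) = max (μ φ) (μ ψ)) ∧
  (∀ (c : ℝ) (φ : C(X, ℝ)), μ (ContinuousMap.const X c ⊓ φ) = min c (μ φ))
/-- A functional `μ : C(X, ℝ) → ℝ` is a *max-plus (idempotent) measure* if it maps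
constants to their values, turns pointwise maxima into maxima, and satisfies
`μ(c + φ) = c + μ φ` for constants `c`. -/
def IsMaxPlusMeasure {X : Type*} [TopologicalSpace X] (μ : C(X, ℝ) → ℝ) : Prop :=
  (∀ c : ℝ, μ (ContinuousMap.const X c) = c) ∧
  (∀ φ ψ : C(X, ℝ), μ (φ ⊔ ψ) = max (μ φ) (μ ψ)) ∧
  (∀ (c : ℝ) (φ : C(X, ℝ)), μ (ContinuousMap.const X c + φ) = c + μ φ)

/-!
A max-min measure `μ` behaves like `φ ↦ sup_x min (λ x) (φ x)` for a density `λ` with values in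
`[-∞, ∞]`, and a max-plus measure like `φ ↦ sup_x (κ x + φ x)` for a density `κ` with values in
`[-∞, 0]`; composing densities with the order isomorphism `squash r = -exp (-r)` of `ℝ` onto
`(-∞, 0)` matches the two classes. Densities are never built: `toMaxPlus μ φ` and `toMaxMin ν ψ`
are suprema of levels certified by strict inequalities `b < μ (ramp ...)`, which are open
conditions in the measure. The two transforms are mutually inverse by a compactness argument: if
`t < μ φ`, a finite subcover shows that `μ` keeps mass above `t` on every neighbourhood of a single
point, as detected by the peaked functions `bump c x k`. The open conditions make the graph of the
bijection closed, and `J(X)`, `I(X)` are compact Hausdorff, so the bijection is a homeomorphism.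
-/

open ContinuousMap Filter Topology Set

abbrev MaxMinMeasures (X : Type*) [TopologicalSpace X] := {μ : C(X, ℝ) → ℝ // IsMaxMinMeasure μ}

abbrev MaxPlusMeasures (X : Type*) [TopologicalSpace X] := {μ : C(X, ℝ) → ℝ // IsMaxPlusMeasure μ}

section Functional

variable {X : Type*} [TopologicalSpace X] {μ : C(X, ℝ) → ℝ}

theorem monotone_of_map_sup (h : ∀ φ ψ, μ (φ ⊔ ψ) = max (μ φ) (μ ψ)) : Monotone μ :=
  fun φ ψ hle => by simpa [sup_eq_right.2 hle] using (h φ ψ).ge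

theorem IsMaxMinMeasure.monotone (h : IsMaxMinMeasure μ) : Monotone μ :=
  monotone_of_map_sup h.2.1

theorem IsMaxPlusMeasure.monotone (h : IsMaxPlusMeasure μ) : Monotone μ :=
  monotone_of_map_sup h.2.1

theorem nonempty_of_map_const (h : ∀ c, μ (const X c) = c) : Nonempty X := by
  by_contra hX
  have : const X (0 : ℝ) = const X 1 := ext fun x => (hX ⟨x⟩).elim
  have h01 := congrArg μ this
  rw [h, h] at h01
  exact zero_ne_one h01

theorem isClosed_setOf_isMaxMinMeasure : IsClosed {μ : C(X, ℝ) → ℝ | IsMaxMinMeasure μ} := by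
  simp only [IsMaxMinMeasure, ofPred_and, ofPred_forall]
  refine .inter (isClosed_iInter fun c => isClosed_eq (continuous_apply _) continuous_const)
    (.inter (isClosed_iInter fun φ => isClosed_iInter fun ψ => isClosed_eq ?_ ?_)
      (isClosed_iInter fun c => isClosed_iInter fun φ => isClosed_eq ?_ ?_)) <;> fun_prop

theorem isClosed_setOf_isMaxPlusMeasure : IsClosed {μ : C(X, ℝ) → ℝ | IsMaxPlusMeasure μ} := by
  simp only [IsMaxPlusMeasure, ofPred_and, ofPred_forall]
  refine .inter (isClosed_iInter fun c => isClosed_eq (continuous_apply _) continuous_const)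
    (.inter (isClosed_iInter fun φ => isClosed_iInter fun ψ => isClosed_eq ?_ ?_)
      (isClosed_iInter fun c => isClosed_iInter fun φ => isClosed_eq ?_ ?_)) <;> fun_prop

variable [CompactSpace X]

theorem const_neg_norm_le (φ : C(X, ℝ)) : const X (-‖φ‖) ≤ φ :=
  fun x => neg_le_of_abs_le ((Real.norm_eq_abs _).symm.trans_le (φ.norm_coe_le_norm x))

theorem le_const_norm (φ : C(X, ℝ)) : φ ≤ const X ‖φ‖ :=
  fun x => le_of_abs_le ((Real.norm_eq_abs _).symm.trans_le (φ.norm_coe_le_norm x))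

theorem map_mem_Icc_norm (hc : ∀ c, μ (const X c) = c) (hm : Monotone μ) (φ : C(X, ℝ)) :
    μ φ ∈ Icc (-‖φ‖) ‖φ‖ :=
  ⟨hc (-‖φ‖) ▸ hm (const_neg_norm_le φ), hc ‖φ‖ ▸ hm (le_const_norm φ)⟩

theorem isCompact_of_isClosed_of_forall_monotone {S : Set (C(X, ℝ) → ℝ)} (hS : IsClosed S)
    (h : ∀ μ ∈ S, (∀ c, μ (const X c) = c) ∧ Monotone μ) : IsCompact S :=
  (isCompact_univ_pi fun _ => isCompact_Icc).of_isClosed_subset hS fun μ hμ =>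
    mem_univ_pi.2 (map_mem_Icc_norm (h μ hμ).1 (h μ hμ).2)

instance : CompactSpace (MaxMinMeasures X) :=
  isCompact_iff_compactSpace.1 <| isCompact_of_isClosed_of_forall_monotone
    isClosed_setOf_isMaxMinMeasure fun _ h => ⟨h.1, monotone_of_map_sup h.2.1⟩

instance : CompactSpace (MaxPlusMeasures X) :=
  isCompact_iff_compactSpace.1 <| isCompact_of_isClosed_of_forall_monotone
    isClosed_setOf_isMaxPlusMeasure fun _ h => ⟨h.1, monotone_of_map_sup h.2.1⟩

end Functional

theorem eventually_le_nat_mul (a : ℝ) {δ : ℝ} (hδ : 0 < δ) : ∀ᶠ n : ℕ in atTop, a ≤ n * δ :=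
  (tendsto_natCast_atTop_atTop.atTop_mul_const hδ).eventually_ge_atTop a

section Ramp

variable {X : Type*} [TopologicalSpace X]

def ramp (n : ℕ) (a lo : ℝ) (φ : C(X, ℝ)) : C(X, ℝ) :=
  ⟨fun y => n * max (φ y - a) 0 + lo, by fun_prop⟩

variable {n n' : ℕ} {a a' lo c : ℝ} {φ φ' : C(X, ℝ)} {y : X}

@[simp] theorem ramp_apply : ramp n a lo φ y = n * max (φ y - a) 0 + lo := rfl

theorem ramp_mono (hn : n ≤ n') (ha : a' ≤ a) (hφ : φ ≤ φ') :
    ramp n a lo φ ≤ ramp n' a' lo φ' := by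
  refine le_def.2 fun y => ?_
  simp only [ramp_apply]
  gcongr
  exact hφ y

theorem ramp_sup : ramp n a lo (φ ⊔ φ') = ramp n a lo φ ⊔ ramp n a lo φ' := by
  ext y
  have : Monotone fun t : ℝ => n * max (t - a) 0 + lo := fun s t hst => by
    beta_reduce
    gcongr
  exact this.map_max

theorem ramp_const : ramp n a lo (const X c) = const X (n * max (c - a) 0 + lo) := rfl

theorem ramp_const_add : ramp n a lo (const X c + φ) = ramp n (a - c) lo φ := by
  ext y
  simp [sub_sub_eq_add_sub, add_comm]

theorem ramp_add_const : ramp n a (lo + c) φ = const X c + ramp n a lo φ := by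
  ext y
  simp only [ramp_apply, ContinuousMap.add_apply, const_apply]
  ring

theorem lt_of_lt_ramp_apply (h : lo < ramp n a lo φ y) : a < φ y := by
  by_contra! hle
  simp [max_eq_right (sub_nonpos.2 hle)] at h

theorem le_ramp_apply : n * (φ y - a) + lo ≤ ramp n a lo φ y := by
  simp only [ramp_apply]
  gcongr
  exact le_max_left _ _

end Ramp

section Bump

variable {X : Type*} [MetricSpace X]

def bump (c : ℝ) (x : X) (k : ℕ) : C(X, ℝ) :=
  ⟨fun y => min c (c + 1 - k * dist x y), by fun_prop⟩

variable {c c' : ℝ} {x y : X} {k : ℕ} {φ : C(X, ℝ)}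

@[simp] theorem bump_apply : bump c x k y = min c (c + 1 - k * dist x y) := rfl

theorem bump_le_const : bump c x k ≤ const X c := fun _ => min_le_left _ _

theorem bump_mono (h : c ≤ c') : bump c x k ≤ bump c' x k := fun _ =>
  min_le_min h (by linarith)

theorem bump_eq_const_add : bump c x k = const X c + bump 0 x k := by
  ext y
  simp only [bump_apply, ContinuousMap.add_apply, const_apply, ← min_add_add_left]
  ring_nf

theorem map_bump_le {μ : C(X, ℝ) → ℝ} (hc : ∀ c, μ (const X c) = c) (hm : Monotone μ) :
    μ (bump c x k) ≤ c :=
  (hm bump_le_const).trans_eq (hc c)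

theorem eventually_bump_apply_eq : ∀ᶠ y in 𝓝 x, bump c x k y = c := by
  have : Tendsto (fun y => (k : ℝ) * dist x y) (𝓝 x) (𝓝 0) :=
    (by fun_prop : Continuous fun y => (k : ℝ) * dist x y).tendsto' x 0 (by simp)
  filter_upwards [this.eventually (gt_mem_nhds zero_lt_one)] with y hy
  exact min_eq_left (by linarith)

variable [CompactSpace X]

theorem eventually_bump_le (h : ∀ᶠ y in 𝓝 x, c ≤ φ y) : ∀ᶠ k in atTop, bump c x k ≤ φ := by
  obtain ⟨δ, hδ, hball⟩ := Metric.eventually_nhds_iff.1 h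
  filter_upwards [eventually_le_nat_mul (c + 1 + ‖φ‖) hδ] with k hk y
  rcases lt_or_ge (dist x y) δ with hy | hy
  · exact (min_le_left _ _).trans (hball (by rwa [dist_comm]))
  · have hk' : (k : ℝ) * δ ≤ k * dist x y := by gcongr
    have : -‖φ‖ ≤ φ y := const_neg_norm_le φ y
    exact show min c _ ≤ φ y from (min_le_right c _).trans (by linarith)

end Bump

noncomputable def squash (r : ℝ) : ℝ := -Real.exp (-r)

theorem squash_neg (r : ℝ) : squash r < 0 := neg_neg_iff_pos.2 (Real.exp_pos _)

theorem squash_strictMono : StrictMono squash := fun a b h => by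
  simpa [squash] using h

theorem exists_squash_eq {y : ℝ} (hy : y < 0) : ∃ r, squash r = y :=
  ⟨-Real.log (-y), by rw [squash, neg_neg, Real.exp_log (neg_pos.2 hy), neg_neg]⟩

section Mass

variable {X : Type*} [MetricSpace X] {μ : C(X, ℝ) → ℝ} {φ : C(X, ℝ)}

theorem IsMaxMinMeasure.min_le_map_bump (h : IsMaxMinMeasure μ) {s c : ℝ} {x : X}
    (H : ∀ k, s ≤ μ (bump c x k)) (c' : ℝ) (k : ℕ) : min c' s ≤ μ (bump c' x k) := by
  rcases le_or_gt c c' with hc | hc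
  · exact (min_le_right _ _).trans ((H k).trans (h.monotone (bump_mono hc)))
  obtain ⟨m, hm⟩ := exists_nat_ge (c - c' + 1)
  -- Outside the ball where `bump c' x k` is flat, `bump c x (k * m)` lies below it.
  have key : const X c' ⊓ bump c x (k * m) ≤ bump c' x k := le_def.2 fun y => by
    simp only [ContinuousMap.inf_apply, const_apply, bump_apply]
    rcases le_or_gt ((k : ℝ) * dist x y) 1 with hd | hd
    · exact (min_le_left _ _).trans (le_min le_rfl (by linarith))
    · refine le_min (min_le_left _ _) ((min_le_right _ _).trans ((min_le_right _ _).trans ?_))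
      push_cast
      have hm1 : (0 : ℝ) ≤ m - 1 := by linarith
      nlinarith [mul_nonneg hm1 (by linarith : (0 : ℝ) ≤ k * dist x y - 1)]
  calc min c' s ≤ min c' (μ (bump c x (k * m))) := min_le_min_left _ (H _)
    _ = μ (const X c' ⊓ bump c x (k * m)) := (h.2.2 _ _).symm
    _ ≤ μ (bump c' x k) := h.monotone key

theorem eventually_const_le_of_lt {c : ℝ} {x : X} (h : c < φ x) : ∀ᶠ y in 𝓝 x, c ≤ φ y :=
  (continuousAt_const.eventually_lt φ.continuous.continuousAt h).mono fun _ => le_of_lt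

variable [CompactSpace X]

theorem exists_le_map_of_forall_eventually_le [Nonempty X]
    (hsup : ∀ φ ψ, μ (φ ⊔ ψ) = max (μ φ) (μ ψ)) (g : X → C(X, ℝ))
    (hg : ∀ x, ∀ᶠ y in 𝓝 x, φ y ≤ g x y) : ∃ x, μ φ ≤ μ (g x) := by
  obtain ⟨t, -, ht⟩ :=
    isCompact_univ.elim_nhds_subcover (fun x => {y | φ y ≤ g x y}) fun x _ => hg x
  have hne : t.Nonempty := by
    obtain ⟨x, hx, -⟩ := mem_iUnion₂.1 (ht (mem_univ (Classical.arbitrary X)))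
    exact ⟨x, hx⟩
  have hle : φ ≤ t.sup' hne g := le_def.2 fun y => by
    obtain ⟨x, hx, hy⟩ := mem_iUnion₂.1 (ht (mem_univ y))
    exact hy.trans (by rw [sup'_apply]; exact Finset.le_sup' (fun x => g x y) hx)
  obtain ⟨x, -, hx⟩ := Finset.exists_mem_eq_sup' hne (μ ∘ g)
  have hμ : μ (t.sup' hne g) = t.sup' hne (μ ∘ g) :=
    map_finset_sup' (⟨μ, hsup⟩ : SupHom C(X, ℝ) ℝ) hne g
  exact ⟨x, (monotone_of_map_sup hsup hle).trans_eq (hμ.trans hx)⟩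

theorem exists_forall_lt_map_bump [Nonempty X] (hsup : ∀ φ ψ, μ (φ ⊔ ψ) = max (μ φ) (μ ψ))
    {s ε : ℝ} (hε : 0 < ε) (hs : s < μ φ) : ∃ x, ∀ k, s < μ (bump (φ x + ε) x k) := by
  by_contra! H
  choose k hk using H
  obtain ⟨x, hx⟩ := exists_le_map_of_forall_eventually_le hsup
    (fun x => bump (φ x + ε) x (k x)) fun x => by
      filter_upwards [eventually_bump_apply_eq, φ.continuous.continuousAt.eventually_lt
        continuousAt_const (lt_add_of_pos_right (φ x) hε)] with y h1 h2
      exact h2.le.trans_eq h1.symm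
  exact (hs.trans_le hx).not_ge (hk x)

theorem le_map_of_forall_le_map_bump (hm : Monotone μ) {t c : ℝ} {x : X}
    (H : ∀ k, t ≤ μ (bump c x k)) (hφ : ∀ᶠ y in 𝓝 x, c ≤ φ y) : t ≤ μ φ :=
  let ⟨k, hk⟩ := (eventually_bump_le hφ).exists
  (H k).trans (hm hk)

theorem IsMaxMinMeasure.exists_lt_forall_min_le_map_bump (h : IsMaxMinMeasure μ) {t : ℝ}
    (ht : t < μ φ) : ∃ x, t < φ x ∧ ∀ c k, min c t ≤ μ (bump c x k) := by
  have := nonempty_of_map_const h.1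
  obtain ⟨s, hts, hs⟩ := exists_between ht
  obtain ⟨x, hx⟩ := exists_forall_lt_map_bump h.2.1 (sub_pos.2 hts) hs
  refine ⟨x, ?_, fun c k => ?_⟩
  · linarith [(hx 0).trans_le (map_bump_le h.1 h.monotone)]
  · exact (min_le_min_left c hts.le).trans (h.min_le_map_bump (fun k => (hx k).le) c k)

theorem IsMaxPlusMeasure.exists_forall_lt_add_map_bump (h : IsMaxPlusMeasure μ) {t : ℝ}
    (ht : t < μ φ) : ∃ x, ∀ k, t < φ x + μ (bump 0 x k) := by
  have := nonempty_of_map_const h.1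
  obtain ⟨s, hts, hs⟩ := exists_between ht
  obtain ⟨x, hx⟩ := exists_forall_lt_map_bump h.2.1 (sub_pos.2 hts) hs
  refine ⟨x, fun k => ?_⟩
  have := hx k
  rw [bump_eq_const_add, h.2.2] at this
  linarith

end Mass

theorem mem_of_lt_csSup_of_isLowerSet {S : Set ℝ} (hS : IsLowerSet S) (hne : S.Nonempty) {r : ℝ}
    (h : r < sSup S) : r ∈ S :=
  let ⟨_, hs, hrs⟩ := exists_lt_of_lt_csSup hne h
  hS hrs.le hs

theorem csSup_eq_of_forall_le_of_forall_lt_mem {S : Set ℝ} {v : ℝ} (h₁ : ∀ r ∈ S, r ≤ v)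
    (h₂ : ∀ r < v, r ∈ S) : sSup S = v :=
  csSup_eq_of_forall_le_of_forall_lt_exists_gt ⟨v - 1, h₂ _ (sub_one_lt v)⟩ h₁ fun _ hr =>
    let ⟨s, hrs, hsv⟩ := exists_between hr
    ⟨s, h₂ s hsv, hrs⟩

theorem exists_nat_lt_mul_max_add_iff {b lo d : ℝ} (hlo : lo < b) :
    (∃ n : ℕ, b < n * max d 0 + lo) ↔ 0 < d := by
  refine ⟨fun ⟨n, hn⟩ => ?_, fun hd => ?_⟩
  · by_contra! hd
    rw [max_eq_right hd, mul_zero, zero_add] at hn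
    exact hlo.not_gt hn
  · obtain ⟨n, hn⟩ := (eventually_le_nat_mul (b - lo + 1) hd).exists
    exact ⟨n, by rw [max_eq_left hd.le]; linarith⟩

section ToMaxPlus

variable {X : Type*} [TopologicalSpace X] {μ μ' : C(X, ℝ) → ℝ} {φ ψ : C(X, ℝ)} {r r' c : ℝ}

/-- For `μ` with density `λ`, this says `r < squash (λ x) + φ x` for some `x`: the ramp is `b - 1`
on `{φ ≤ r - squash b}` and steep above it, so its `μ`-value exceeds `b` iff `b < λ x` for some
`x` with `r - squash b < φ x`. -/
def PlusLowerBound (μ : C(X, ℝ) → ℝ) (φ : C(X, ℝ)) (r : ℝ) : Prop :=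
  ∃ b : ℝ, ∃ n : ℕ, b < μ (ramp n (r - squash b) (b - 1) φ)

noncomputable def toMaxPlus (μ : C(X, ℝ) → ℝ) (φ : C(X, ℝ)) : ℝ :=
  sSup {r | PlusLowerBound μ φ r}

theorem PlusLowerBound.mono_measure (hμ : μ ≤ μ') (hr : PlusLowerBound μ φ r) :
    PlusLowerBound μ' φ r :=
  let ⟨b, n, h⟩ := hr
  ⟨b, n, h.trans_le (hμ _)⟩

theorem PlusLowerBound.mono (hm : Monotone μ) (hφ : φ ≤ ψ) (hr : r' ≤ r)
    (h : PlusLowerBound μ φ r) : PlusLowerBound μ ψ r' :=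
  let ⟨b, n, h⟩ := h
  ⟨b, n, h.trans_le (hm (ramp_mono le_rfl (by linarith) hφ))⟩

theorem plusLowerBound_const_iff (h : IsMaxMinMeasure μ) :
    PlusLowerBound μ (const X c) r ↔ r < c := by
  simp only [PlusLowerBound, ramp_const, h.1]
  simp_rw [exists_nat_lt_mul_max_add_iff (sub_one_lt _)]
  refine ⟨fun ⟨b, hb⟩ => by linarith [squash_neg b], fun hrc => ?_⟩
  obtain ⟨b, hb⟩ := exists_squash_eq (by linarith : (r - c) / 2 < 0)
  exact ⟨b, by linarith⟩

theorem plusLowerBound_sup_iff (hsup : ∀ φ ψ, μ (φ ⊔ ψ) = max (μ φ) (μ ψ)) :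
    PlusLowerBound μ (φ ⊔ ψ) r ↔ PlusLowerBound μ φ r ∨ PlusLowerBound μ ψ r := by
  simp only [PlusLowerBound, ramp_sup, hsup, lt_max_iff, exists_or]

theorem plusLowerBound_const_add_iff :
    PlusLowerBound μ (const X c + φ) r ↔ PlusLowerBound μ φ (r - c) := by
  simp only [PlusLowerBound, ramp_const_add, sub_right_comm]

variable [CompactSpace X]

theorem PlusLowerBound.lt_norm (h : IsMaxMinMeasure μ) (hr : PlusLowerBound μ φ r) : r < ‖φ‖ :=
  (plusLowerBound_const_iff h).1 (hr.mono h.monotone (le_const_norm φ) le_rfl)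

theorem le_toMaxPlus (h : IsMaxMinMeasure μ) (hr : PlusLowerBound μ φ r) : r ≤ toMaxPlus μ φ :=
  le_csSup ⟨‖φ‖, fun _ hs => (hs.lt_norm h).le⟩ hr

theorem plusLowerBound_of_lt_toMaxPlus (h : IsMaxMinMeasure μ) (hr : r < toMaxPlus μ φ) :
    PlusLowerBound μ φ r :=
  mem_of_lt_csSup_of_isLowerSet (fun _ _ hle hs => hs.mono h.monotone le_rfl hle)
    ⟨_, ((plusLowerBound_const_iff h).2 (sub_one_lt _)).mono h.monotone (const_neg_norm_le φ)
      le_rfl⟩ hr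

theorem toMaxPlus_mono (h : IsMaxMinMeasure μ) (h' : IsMaxMinMeasure μ') (hμ : μ ≤ μ') :
    toMaxPlus μ φ ≤ toMaxPlus μ' φ :=
  le_of_forall_lt_imp_le_of_dense fun _ hr =>
    le_toMaxPlus h' ((plusLowerBound_of_lt_toMaxPlus h hr).mono_measure hμ)

theorem isMaxPlusMeasure_toMaxPlus (h : IsMaxMinMeasure μ) : IsMaxPlusMeasure (toMaxPlus μ) := by
  refine ⟨fun c => csSup_eq_of_forall_le_of_forall_lt_mem
      (fun r hr => ((plusLowerBound_const_iff h).1 hr).le) fun r => (plusLowerBound_const_iff h).2,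
    fun φ ψ => csSup_eq_of_forall_le_of_forall_lt_mem (fun r hr => ?_) fun r hr => ?_,
    fun c φ => csSup_eq_of_forall_le_of_forall_lt_mem (fun r hr => ?_) fun r hr => ?_⟩
  · rcases (plusLowerBound_sup_iff h.2.1).1 hr with hr | hr
    exacts [le_max_of_le_left (le_toMaxPlus h hr), le_max_of_le_right (le_toMaxPlus h hr)]
  · rcases lt_max_iff.1 hr with hr | hr
    exacts [(plusLowerBound_sup_iff h.2.1).2 (.inl (plusLowerBound_of_lt_toMaxPlus h hr)),
      (plusLowerBound_sup_iff h.2.1).2 (.inr (plusLowerBound_of_lt_toMaxPlus h hr))]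
  · linarith [le_toMaxPlus h (plusLowerBound_const_add_iff.1 hr)]
  · exact plusLowerBound_const_add_iff.2 (plusLowerBound_of_lt_toMaxPlus h (by linarith))

end ToMaxPlus

section ToMaxMin

variable {X : Type*} [TopologicalSpace X] {ν : C(X, ℝ) → ℝ} {φ ψ : C(X, ℝ)} {r r' c : ℝ}

/-- For `ν` with density `κ`, this says `r < ψ x` and `squash r < κ x` for some `x`, i.e.
`r < min (ψ x) (squash⁻¹ (κ x))`. -/
def MinLowerBound (ν : C(X, ℝ) → ℝ) (ψ : C(X, ℝ)) (r : ℝ) : Prop :=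
  ∃ n : ℕ, squash r < ν (ramp n r (squash r - 1) ψ ⊓ 0)

noncomputable def toMaxMin (ν : C(X, ℝ) → ℝ) (ψ : C(X, ℝ)) : ℝ :=
  sSup {r | MinLowerBound ν ψ r}

theorem const_add_inf_zero_le {d : ℝ} (hd : 0 ≤ d) (f : C(X, ℝ)) :
    (const X d + f) ⊓ 0 ≤ const X d + f ⊓ 0 := le_def.2 fun y => by
  simp only [ContinuousMap.inf_apply, ContinuousMap.add_apply, const_apply,
    ContinuousMap.zero_apply, ← min_add_add_left]
  exact min_le_min le_rfl (by linarith)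

theorem MinLowerBound.mono (h : IsMaxPlusMeasure ν) (hφ : φ ≤ ψ) (hr : r' ≤ r)
    (hb : MinLowerBound ν φ r) : MinLowerBound ν ψ r' := by
  obtain ⟨n, hn⟩ := hb
  have hd : 0 ≤ squash r - squash r' := sub_nonneg.2 (squash_strictMono.monotone hr)
  have key : ramp n r (squash r - 1) φ ⊓ 0
      ≤ const X (squash r - squash r') + ramp n r' (squash r' - 1) ψ ⊓ 0 :=
    calc ramp n r (squash r - 1) φ ⊓ 0 ≤ ramp n r' (squash r - 1) ψ ⊓ 0 :=
          inf_le_inf_right _ (ramp_mono le_rfl hr hφ)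
      _ = (const X (squash r - squash r') + ramp n r' (squash r' - 1) ψ) ⊓ 0 := by
          rw [← ramp_add_const]
          congr 2
          ring
      _ ≤ _ := const_add_inf_zero_le hd _
  refine ⟨n, ?_⟩
  have := hn.trans_le (h.monotone key)
  rw [h.2.2] at this
  linarith

theorem minLowerBound_const_iff (h : IsMaxPlusMeasure ν) :
    MinLowerBound ν (const X c) r ↔ r < c := by
  have hconst (n : ℕ) : ramp n r (squash r - 1) (const X c) ⊓ 0
      = const X (min (n * max (c - r) 0 + (squash r - 1)) 0) := rfl
  simp only [MinLowerBound, hconst, h.1, lt_min_iff, squash_neg, and_true]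
  rw [exists_nat_lt_mul_max_add_iff (sub_one_lt _), sub_pos]

theorem minLowerBound_sup_iff (hsup : ∀ φ ψ, ν (φ ⊔ ψ) = max (ν φ) (ν ψ)) :
    MinLowerBound ν (φ ⊔ ψ) r ↔ MinLowerBound ν φ r ∨ MinLowerBound ν ψ r := by
  have hdistrib (f g : C(X, ℝ)) : (f ⊔ g) ⊓ 0 = f ⊓ 0 ⊔ g ⊓ 0 := by
    ext y
    exact min_max_distrib_right _ _ _
  simp only [MinLowerBound, ramp_sup, hdistrib, hsup, lt_max_iff, exists_or]

theorem minLowerBound_const_inf_iff (h : IsMaxPlusMeasure ν) :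
    MinLowerBound ν (const X c ⊓ ψ) r ↔ r < c ∧ MinLowerBound ν ψ r := by
  refine ⟨fun hr => ⟨(minLowerBound_const_iff h).1 (hr.mono h inf_le_left le_rfl),
    hr.mono h inf_le_right le_rfl⟩, fun ⟨hrc, n, hn⟩ => ?_⟩
  obtain ⟨N, hnN, hN⟩ := ((eventually_ge_atTop n).and
    (eventually_le_nat_mul (1 - squash r) (sub_pos.2 hrc))).exists
  refine ⟨N, hn.trans_le (h.monotone (le_def.2 fun y => ?_))⟩
  simp only [ContinuousMap.inf_apply, ContinuousMap.zero_apply, ramp_apply, const_apply]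
  rcases le_total (ψ y) c with hy | hy
  · rw [min_eq_right hy]
    gcongr
  · rw [min_eq_left hy, max_eq_left (sub_pos.2 hrc).le]
    exact le_min ((min_le_right _ _).trans (by linarith)) (min_le_right _ _)

variable [CompactSpace X]

theorem MinLowerBound.lt_norm (h : IsMaxPlusMeasure ν) (hr : MinLowerBound ν ψ r) : r < ‖ψ‖ :=
  (minLowerBound_const_iff h).1 (hr.mono h (le_const_norm ψ) le_rfl)

theorem le_toMaxMin (h : IsMaxPlusMeasure ν) (hr : MinLowerBound ν ψ r) : r ≤ toMaxMin ν ψ :=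
  le_csSup ⟨‖ψ‖, fun _ hs => (hs.lt_norm h).le⟩ hr

theorem minLowerBound_of_lt_toMaxMin (h : IsMaxPlusMeasure ν) (hr : r < toMaxMin ν ψ) :
    MinLowerBound ν ψ r :=
  mem_of_lt_csSup_of_isLowerSet (fun _ _ hle hs => hs.mono h le_rfl hle)
    ⟨_, ((minLowerBound_const_iff h).2 (sub_one_lt _)).mono h (const_neg_norm_le ψ) le_rfl⟩ hr

theorem isMaxMinMeasure_toMaxMin (h : IsMaxPlusMeasure ν) : IsMaxMinMeasure (toMaxMin ν) := by
  refine ⟨fun c => csSup_eq_of_forall_le_of_forall_lt_mem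
      (fun r hr => ((minLowerBound_const_iff h).1 hr).le) fun r => (minLowerBound_const_iff h).2,
    fun φ ψ => csSup_eq_of_forall_le_of_forall_lt_mem (fun r hr => ?_) fun r hr => ?_,
    fun c ψ => csSup_eq_of_forall_le_of_forall_lt_mem (fun r hr => ?_) fun r hr => ?_⟩
  · rcases (minLowerBound_sup_iff h.2.1).1 hr with hr | hr
    exacts [le_max_of_le_left (le_toMaxMin h hr), le_max_of_le_right (le_toMaxMin h hr)]
  · rcases lt_max_iff.1 hr with hr | hr
    exacts [(minLowerBound_sup_iff h.2.1).2 (.inl (minLowerBound_of_lt_toMaxMin h hr)),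
      (minLowerBound_sup_iff h.2.1).2 (.inr (minLowerBound_of_lt_toMaxMin h hr))]
  · obtain ⟨hrc, hr⟩ := (minLowerBound_const_inf_iff h).1 hr
    exact le_min hrc.le (le_toMaxMin h hr)
  · obtain ⟨hrc, hr⟩ := lt_min_iff.1 hr
    exact (minLowerBound_const_inf_iff h).2 ⟨hrc, minLowerBound_of_lt_toMaxMin h hr⟩

end ToMaxMin

section Inverse

variable {X : Type*} [MetricSpace X] [CompactSpace X] {μ ν : C(X, ℝ) → ℝ} {φ ψ : C(X, ℝ)}
  {r : ℝ}

theorem IsMaxMinMeasure.le_of_plusLowerBound (h : IsMaxMinMeasure μ) {n : ℕ}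
    (hP : PlusLowerBound μ (ramp n r (squash r - 1) ψ ⊓ 0) (squash r)) : r ≤ μ ψ := by
  obtain ⟨b, m, hb⟩ := hP
  obtain ⟨x, hGx, hmass⟩ := h.exists_lt_forall_min_le_map_bump hb
  have hχx := lt_of_lt_ramp_apply ((sub_one_lt b).trans hGx)
  have hχ0 : (ramp n r (squash r - 1) ψ ⊓ 0) x ≤ 0 := min_le_right _ _
  have hrb : r < b := squash_strictMono.lt_iff_lt.1 (by linarith)
  have hχψ : (ramp n r (squash r - 1) ψ ⊓ 0) x ≤ ramp n r (squash r - 1) ψ x := min_le_left _ _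
  have hψx : r < ψ x := lt_of_lt_ramp_apply (by linarith [squash_neg b] : squash r - 1 < _)
  obtain ⟨c, hrc, hc⟩ := exists_between (lt_min hψx hrb)
  have := le_map_of_forall_le_map_bump h.monotone (hmass c)
    (eventually_const_le_of_lt (hc.trans_le (min_le_left _ _)))
  rw [min_eq_left (hc.le.trans (min_le_right _ _))] at this
  linarith

theorem IsMaxMinMeasure.exists_plusLowerBound (h : IsMaxMinMeasure μ) (hr : r < μ ψ) :
    ∃ n : ℕ, ∃ s > squash r, PlusLowerBound μ (ramp n r (squash r - 1) ψ ⊓ 0) s := by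
  obtain ⟨b, hrb, hb⟩ := exists_between hr
  obtain ⟨t, hbt, ht⟩ := exists_between hb
  obtain ⟨x, htx, hmass⟩ := h.exists_lt_forall_min_le_map_bump ht
  obtain ⟨s, hrs, hsb⟩ := exists_between (squash_strictMono hrb)
  obtain ⟨n, hn⟩ := (eventually_le_nat_mul (1 - squash r) (sub_pos.2 hrb)).exists
  obtain ⟨m, hm⟩ := (eventually_le_nat_mul 2 (sub_pos.2 hsb)).exists
  refine ⟨n, s, hrs, b, m, ?_⟩
  have hG : ∀ᶠ y in 𝓝 x,
      b + 1 ≤ ramp m (s - squash b) (b - 1) (ramp n r (squash r - 1) ψ ⊓ 0) y := by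
    filter_upwards [eventually_const_le_of_lt (hbt.trans htx)] with y hy
    have hχ : 0 ≤ (ramp n r (squash r - 1) ψ ⊓ 0) y := by
      refine le_min (le_ramp_apply.trans' ?_) le_rfl
      nlinarith [mul_le_mul_of_nonneg_left hy (Nat.cast_nonneg (α := ℝ) n)]
    refine le_ramp_apply.trans' ?_
    nlinarith [mul_le_mul_of_nonneg_left hχ (Nat.cast_nonneg (α := ℝ) m)]
  calc b < min (b + 1) t := lt_min (lt_add_one b) hbt
    _ ≤ _ := le_map_of_forall_le_map_bump h.monotone (hmass (b + 1)) hG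

theorem IsMaxPlusMeasure.le_of_minLowerBound (h : IsMaxPlusMeasure ν) {b : ℝ} {m : ℕ}
    (hQ : MinLowerBound ν (ramp m (r - squash b) (b - 1) φ) b) : r ≤ ν φ := by
  obtain ⟨n, hn⟩ := hQ
  obtain ⟨x, hx⟩ := h.exists_forall_lt_add_map_bump hn
  have hW0 : (ramp n b (squash b - 1) (ramp m (r - squash b) (b - 1) φ) ⊓ 0) x ≤ 0 :=
    min_le_right _ _
  have hWx : squash b < (ramp n b (squash b - 1) (ramp m (r - squash b) (b - 1) φ) ⊓ 0) x := by
    linarith [hx 0, map_bump_le h.1 h.monotone (c := 0) (x := x) (k := 0)]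
  have hφx : r - squash b < φ x := lt_of_lt_ramp_apply ((sub_one_lt b).trans
    (lt_of_lt_ramp_apply ((sub_one_lt _).trans (hWx.trans_le (min_le_left _ _)))))
  refine le_map_of_forall_le_map_bump h.monotone (fun k => ?_) (eventually_const_le_of_lt hφx)
  rw [bump_eq_const_add, h.2.2]
  linarith [hx k]

theorem IsMaxPlusMeasure.exists_minLowerBound (h : IsMaxPlusMeasure ν) (hr : r < ν φ) :
    ∃ b : ℝ, ∃ m : ℕ, ∃ s > b, MinLowerBound ν (ramp m (r - squash b) (b - 1) φ) s := by
  obtain ⟨t, hrt, ht⟩ := exists_between hr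
  obtain ⟨x, hx⟩ := h.exists_forall_lt_add_map_bump ht
  have hD : t - φ x < 0 := by
    linarith [hx 0, map_bump_le h.1 h.monotone (c := 0) (x := x) (k := 0)]
  obtain ⟨y, hry, hyt⟩ := exists_between (by linarith : r - φ x < t - φ x)
  obtain ⟨y', hyy', hy't⟩ := exists_between hyt
  obtain ⟨b, rfl⟩ := exists_squash_eq (hyy'.trans (hy't.trans hD))
  obtain ⟨s, rfl⟩ := exists_squash_eq (hy't.trans hD)
  obtain ⟨c, hc, hcx⟩ := exists_between (by linarith : r - squash b < φ x)
  obtain ⟨m, hm⟩ := (eventually_le_nat_mul (s - b + 2) (sub_pos.2 hc)).exists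
  obtain ⟨n, hn⟩ := exists_nat_ge (1 - squash s)
  refine ⟨b, m, s, squash_strictMono.lt_iff_lt.1 hyy', n, ?_⟩
  have hW : ∀ᶠ y in 𝓝 x,
      0 ≤ (ramp n s (squash s - 1) (ramp m (r - squash b) (b - 1) φ) ⊓ 0) y := by
    filter_upwards [eventually_const_le_of_lt hcx] with y hy
    have hG : s + 1 ≤ ramp m (r - squash b) (b - 1) φ y := by
      refine le_ramp_apply.trans' ?_
      nlinarith [mul_le_mul_of_nonneg_left hy (Nat.cast_nonneg (α := ℝ) m)]
    refine le_min (le_ramp_apply.trans' ?_) le_rfl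
    nlinarith [mul_le_mul_of_nonneg_left hG (Nat.cast_nonneg (α := ℝ) n)]
  obtain ⟨k, hk⟩ := (eventually_bump_le hW).exists
  linarith [hx k, h.monotone hk]

theorem toMaxMin_toMaxPlus (h : IsMaxMinMeasure μ) : toMaxMin (toMaxPlus μ) = μ := by
  funext ψ
  refine csSup_eq_of_forall_le_of_forall_lt_mem (fun r ⟨n, hn⟩ =>
    h.le_of_plusLowerBound (plusLowerBound_of_lt_toMaxPlus h hn)) fun r hr => ?_
  obtain ⟨n, s, hs, hP⟩ := h.exists_plusLowerBound hr
  exact ⟨n, hs.trans_le (le_toMaxPlus h hP)⟩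

theorem toMaxPlus_toMaxMin (h : IsMaxPlusMeasure ν) : toMaxPlus (toMaxMin ν) = ν := by
  funext φ
  refine csSup_eq_of_forall_le_of_forall_lt_mem (fun r ⟨b, m, hb⟩ =>
    h.le_of_minLowerBound (minLowerBound_of_lt_toMaxMin h hb)) fun r hr => ?_
  obtain ⟨b, m, s, hs, hQ⟩ := h.exists_minLowerBound hr
  exact ⟨b, m, hs.trans_le (le_toMaxMin h hQ)⟩

end Inverse

theorem continuous_of_isClosed_graph {α β : Type*} [TopologicalSpace α] [TopologicalSpace β]
    [CompactSpace β] {f : α → β} (hf : IsClosed {p : α × β | p.2 = f p.1}) : Continuous f := by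
  refine continuous_iff_isClosed.2 fun C hC => ?_
  have : f ⁻¹' C = Prod.fst '' ({p : α × β | p.2 = f p.1} ∩ Prod.snd ⁻¹' C) := by
    ext x
    refine ⟨fun hx => ⟨(x, f x), ⟨rfl, hx⟩, rfl⟩, ?_⟩
    rintro ⟨p, ⟨hp, hpC⟩, rfl⟩
    rw [mem_preimage, ← show p.2 = f p.1 from hp]
    exact hpC
  rw [this]
  exact isClosedMap_fst_of_compactSpace _ (hf.inter (hC.preimage continuous_snd))

theorem isClosed_setOf_lt_imp_le {Y : Type*} [TopologicalSpace Y] {f g : Y → ℝ}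
    (hf : Continuous f) (hg : Continuous g) (b r : ℝ) : IsClosed {y | b < f y → r ≤ g y} := by
  simp only [imp_iff_not_or, not_lt, ofPred_or]
  exact (isClosed_le hf continuous_const).union (isClosed_le continuous_const hg)

section Homeomorph

variable {X : Type*} [MetricSpace X] [CompactSpace X]

theorem toMaxPlus_eq_iff {μ ν : C(X, ℝ) → ℝ} (h : IsMaxMinMeasure μ) (hν : IsMaxPlusMeasure ν) :
    toMaxPlus μ = ν ↔ (∀ φ r, PlusLowerBound μ φ r → r ≤ ν φ) ∧
      ∀ ψ r, MinLowerBound ν ψ r → r ≤ μ ψ := by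
  refine ⟨?_, fun ⟨h₁, h₂⟩ => ?_⟩
  · rintro rfl
    exact ⟨fun φ r => le_toMaxPlus h, fun ψ r hr =>
      (le_toMaxMin hν hr).trans_eq (congrFun (toMaxMin_toMaxPlus h) ψ)⟩
  have hle (φ : C(X, ℝ)) : toMaxPlus μ φ ≤ ν φ := le_of_forall_lt_imp_le_of_dense fun r hr =>
    h₁ φ r (plusLowerBound_of_lt_toMaxPlus h hr)
  have hge : toMaxMin ν ≤ μ := fun ψ => le_of_forall_lt_imp_le_of_dense fun r hr =>
    h₂ ψ r (minLowerBound_of_lt_toMaxMin hν hr)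
  funext φ
  refine (hle φ).antisymm ?_
  calc ν φ = toMaxPlus (toMaxMin ν) φ := (congrFun (toMaxPlus_toMaxMin hν) φ).symm
    _ ≤ toMaxPlus μ φ := toMaxPlus_mono (isMaxMinMeasure_toMaxMin hν) h hge

noncomputable def maxMinEquivMaxPlus : MaxMinMeasures X ≃ MaxPlusMeasures X where
  toFun μ := ⟨toMaxPlus μ.1, isMaxPlusMeasure_toMaxPlus μ.2⟩
  invFun ν := ⟨toMaxMin ν.1, isMaxMinMeasure_toMaxMin ν.2⟩
  left_inv μ := Subtype.ext (toMaxMin_toMaxPlus μ.2)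
  right_inv ν := Subtype.ext (toMaxPlus_toMaxMin ν.2)

theorem isClosed_graph_maxMinEquivMaxPlus :
    IsClosed {p : MaxMinMeasures X × MaxPlusMeasures X | p.2 = maxMinEquivMaxPlus p.1} := by
  have hgraph : {p : MaxMinMeasures X × MaxPlusMeasures X | p.2 = maxMinEquivMaxPlus p.1} =
      {p | ∀ φ r, PlusLowerBound p.1.1 φ r → r ≤ p.2.1 φ} ∩
        {p | ∀ ψ r, MinLowerBound p.2.1 ψ r → r ≤ p.1.1 ψ} := by
    ext p
    exact Subtype.ext_iff.trans (eq_comm.trans (toMaxPlus_eq_iff p.1.2 p.2.2))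
  rw [hgraph]
  simp only [PlusLowerBound, MinLowerBound, forall_exists_index, ofPred_forall]
  have hfst (φ : C(X, ℝ)) : Continuous fun p : MaxMinMeasures X × MaxPlusMeasures X => p.1.1 φ :=
    (continuous_apply φ).comp (continuous_subtype_val.comp continuous_fst)
  have hsnd (φ : C(X, ℝ)) : Continuous fun p : MaxMinMeasures X × MaxPlusMeasures X => p.2.1 φ :=
    (continuous_apply φ).comp (continuous_subtype_val.comp continuous_snd)
  exact .inter (isClosed_iInter fun φ => isClosed_iInter fun r => isClosed_iInter fun b =>
      isClosed_iInter fun n => isClosed_setOf_lt_imp_le (hfst _) (hsnd φ) _ _)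
    (isClosed_iInter fun ψ => isClosed_iInter fun r => isClosed_iInter fun n =>
      isClosed_setOf_lt_imp_le (hsnd _) (hfst ψ) _ _)

noncomputable def maxMinHomeomorphMaxPlus : MaxMinMeasures X ≃ₜ MaxPlusMeasures X :=
  (continuous_of_isClosed_graph isClosed_graph_maxMinEquivMaxPlus).homeoOfEquivCompactToT2

end Homeomorph

/-- for every compact metrizable space `X`, the space `J(X)` of
max-min measures and the space `I(X)` of max-plus (idempotent) measures, both
with the weak* topology, are homeomorphic. -/
theorem maxMin_homeomorph_maxPlus
    (X : Type*) [TopologicalSpace X] [CompactSpace X]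
    [TopologicalSpace.MetrizableSpace X] :
    Nonempty ({μ : C(X, ℝ) → ℝ // IsMaxMinMeasure μ} ≃ₜ
      {μ : C(X, ℝ) → ℝ // IsMaxPlusMeasure μ}) := by
  let : MetricSpace X := TopologicalSpace.metrizableSpaceMetric X
  exact ⟨maxMinHomeomorphMaxPlus⟩
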